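/- Let p be a prime and f : \mathbb{R}^+ \to \mathbb{R}^+. Then f \circ d_p is an ultrametric on \mathbb{Q}_p if and only if there exists an ultrametric preserving function g : \mathbb{R}^+ \to \mathbb{R}^+ whose restriction to the range \{0\} \cup \{p^n : n \in \mathbb{Z}\} of |\cdot|_p coincides with the restriction of f. -/

import Mathlib

def IsMetric {X : Type*} (d : X → X → ℝ) : Prop :=
  (∀ x y, d x y = 0 ↔ x = y) ∧ (∀ x y, d x y = d y x) ∧
  (∀ x y z, d x y ≤ d x z + d z y)

def IsUltrametric {X : Type*} (d : X → X → ℝ) : Prop :=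
  IsMetric d ∧ ∀ x y z, d x y ≤ max (d x z) (d z y)

def Amenable (f : ℝ → ℝ) : Prop := f 0 = 0 ∧ ∀ x > 0, f x > 0

def MetricPreserving (f : ℝ → ℝ) : Prop :=
  ∀ (X : Type) (d : X → X → ℝ), IsMetric d → IsMetric (fun x y => f (d x y))

def UltrametricPreserving (f : ℝ → ℝ) : Prop :=
  ∀ (X : Type) (d : X → X → ℝ), IsUltrametric d → IsUltrametric (fun x y => f (d x y))

def TriangleTriplet (a b c : ℝ) : Prop := a ≤ b + c ∧ b ≤ a + c ∧ c ≤ a + b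

def StrongTriangleTriplet (a b c : ℝ) : Prop :=
  a ≤ max b c ∧ b ≤ max a c ∧ c ≤ max a b

/-!
If `f ∘ d_p` is an ultrametric, then `f 0 = 0`, `f (p ^ n) > 0`, and `n ↦ f (p ^ n)` is
monotone, because in the triangle `0, p ^ (-n), p ^ (-n-1)` the two long sides have length
`p ^ (n+1)`. Rounding every `t > 0` up to the next power of `p` then extends `f` from the value
set of `|·|_p` to an amenable increasing, hence ultrametric preserving, function. Conversely,
`f ∘ d_p` only sees the values of `f` on that value set, where it agrees with `g`.
-/

theorem IsMetric.nonneg {X : Type*} {d : X → X → ℝ} (hd : IsMetric d) (x y : X) :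
    0 ≤ d x y := by
  obtain ⟨heq, hsymm, htri⟩ := hd
  have := htri x x y
  rw [(heq x x).2 rfl, hsymm y x] at this
  linarith

theorem IsMetric.pos_of_ne {X : Type*} {d : X → X → ℝ} (hd : IsMetric d) {x y : X}
    (hxy : x ≠ y) : 0 < d x y :=
  (hd.nonneg x y).lt_of_ne fun h => hxy ((hd.1 x y).1 h.symm)

theorem isUltrametric_dist (X : Type*) [MetricSpace X] [IsUltrametricDist X] :
    IsUltrametric (dist : X → X → ℝ) :=
  ⟨⟨fun _ _ => dist_eq_zero, dist_comm, fun x y z => dist_triangle x z y⟩,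
    fun x y z => dist_triangle_max x z y⟩

theorem ultrametricPreserving_of_monotone {g : ℝ → ℝ} (hg : Amenable g) (hmono : Monotone g) :
    UltrametricPreserving g := by
  intro X d hd
  obtain ⟨hdm, hmax⟩ := hd
  have hgmax : ∀ x y z, g (d x y) ≤ max (g (d x z)) (g (d z y)) := fun x y z =>
    (hmono (hmax x y z)).trans (hmono.map_max).le
  have hnonneg : ∀ x y, 0 ≤ g (d x y) := fun x y => hg.1 ▸ hmono (hdm.nonneg x y)
  refine ⟨⟨fun x y => ⟨fun h => ?_, ?_⟩, fun x y => congrArg g (hdm.2.1 x y),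
    fun x y z => ?_⟩, hgmax⟩
  · by_contra hxy
    exact (hg.2 _ (hdm.pos_of_ne hxy)).ne' h
  · rintro rfl
    simp only [(hdm.1 x x).2 rfl, hg.1]
  · exact (hgmax x y z).trans (max_le_add_of_nonneg (hnonneg x z) (hnonneg z y))

section ZpowCeilExtend

noncomputable def zpowCeilExtend (b : ℕ) (f : ℝ → ℝ) (t : ℝ) : ℝ :=
  if t ≤ 0 then 0 else f ((b : ℝ) ^ Int.clog b t)

variable {b : ℕ} {f : ℝ → ℝ}

theorem zpowCeilExtend_zero : zpowCeilExtend b f 0 = 0 := if_pos le_rfl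

theorem zpowCeilExtend_zpow (hb : 1 < b) (n : ℤ) :
    zpowCeilExtend b f ((b : ℝ) ^ n) = f ((b : ℝ) ^ n) := by
  have hpos : (0 : ℝ) < (b : ℝ) ^ n := zpow_pos (by positivity) n
  rw [zpowCeilExtend, if_neg hpos.not_ge, Int.clog_zpow hb]

theorem zpowCeilExtend_nonneg (hf : ∀ n : ℤ, 0 < f ((b : ℝ) ^ n)) (t : ℝ) :
    0 ≤ zpowCeilExtend b f t := by
  unfold zpowCeilExtend
  split_ifs
  exacts [le_rfl, (hf _).le]

theorem amenable_zpowCeilExtend (hf : ∀ n : ℤ, 0 < f ((b : ℝ) ^ n)) :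
    Amenable (zpowCeilExtend b f) :=
  ⟨zpowCeilExtend_zero, fun t ht => by rw [zpowCeilExtend, if_neg ht.not_ge]; exact hf _⟩

theorem monotone_zpowCeilExtend (hf : ∀ n : ℤ, 0 < f ((b : ℝ) ^ n))
    (hmono : Monotone fun n : ℤ => f ((b : ℝ) ^ n)) : Monotone (zpowCeilExtend b f) := by
  intro s t hst
  rcases le_or_gt s 0 with hs | hs
  · rw [zpowCeilExtend, if_pos hs]
    exact zpowCeilExtend_nonneg hf t
  · rw [zpowCeilExtend, zpowCeilExtend, if_neg hs.not_ge, if_neg (hs.trans_le hst).not_ge]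
    exact hmono (Int.clog_mono_right hs hst)

end ZpowCeilExtend

namespace Padic

variable {p : ℕ} [Fact p.Prime]

theorem dist_p_zpow_zero (n : ℤ) : dist ((p : ℚ_[p]) ^ (-n)) 0 = (p : ℝ) ^ n := by
  rw [dist_zero_right, norm_p_zpow, neg_neg]

theorem dist_eq_zero_or_exists_zpow (x y : ℚ_[p]) :
    dist x y = 0 ∨ ∃ n : ℤ, dist x y = (p : ℝ) ^ n := by
  rcases eq_or_ne x y with rfl | hxy
  · exact Or.inl (dist_self x)
  · exact Or.inr ⟨_, by rw [dist_eq_norm, norm_eq_zpow_neg_valuation (sub_ne_zero.2 hxy)]⟩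

theorem dist_p_zpow_p_zpow_succ (n : ℤ) :
    dist ((p : ℚ_[p]) ^ (-n)) ((p : ℚ_[p]) ^ (-(n + 1))) = (p : ℝ) ^ (n + 1) := by
  have hp : (1 : ℝ) < p := by exact_mod_cast (Fact.out : p.Prime).one_lt
  have hlt : (p : ℝ) ^ n < (p : ℝ) ^ (n + 1) := zpow_lt_zpow_right₀ hp (lt_add_one n)
  have hne : dist ((p : ℚ_[p]) ^ (-n)) 0 ≠ dist 0 ((p : ℚ_[p]) ^ (-(n + 1))) := by
    rw [dist_comm 0, dist_p_zpow_zero, dist_p_zpow_zero]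
    exact hlt.ne
  rw [IsUltrametricDist.dist_eq_max_of_dist_ne_dist _ _ _ hne, dist_comm 0,
    dist_p_zpow_zero, dist_p_zpow_zero, max_eq_right hlt.le]

variable {f : ℝ → ℝ} (hf : IsUltrametric fun x y : ℚ_[p] => f (dist x y))
include hf

theorem apply_zero_of_isUltrametric : f 0 = 0 := by
  simpa using (hf.1.1 0 0).2 rfl

theorem apply_zpow_pos_of_isUltrametric (n : ℤ) : 0 < f ((p : ℝ) ^ n) := by
  have hne : (p : ℚ_[p]) ^ (-n) ≠ 0 :=
    zpow_ne_zero _ (by exact_mod_cast (Fact.out : p.Prime).ne_zero)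
  simpa only [dist_p_zpow_zero] using hf.1.pos_of_ne hne

theorem monotone_apply_zpow_of_isUltrametric : Monotone fun n : ℤ => f ((p : ℝ) ^ n) := by
  refine monotone_int_of_le_succ fun n => ?_
  simpa only [dist_p_zpow_zero, dist_p_zpow_p_zpow_succ, dist_comm 0, max_self] using
    hf.2 ((p : ℚ_[p]) ^ (-n)) 0 ((p : ℚ_[p]) ^ (-(n + 1)))

end Padic

theorem stmt13 (p : ℕ) [Fact p.Prime] (f : ℝ → ℝ) :
    IsUltrametric (fun x y : ℚ_[p] => f (dist x y)) ↔
      ∃ g : ℝ → ℝ, UltrametricPreserving g ∧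
        ∀ t : ℝ, (t = 0 ∨ ∃ n : ℤ, t = (p : ℝ) ^ n) → g t = f t := by
  constructor
  · intro hf
    have hpos := Padic.apply_zpow_pos_of_isUltrametric hf
    refine ⟨zpowCeilExtend p f, ultrametricPreserving_of_monotone
      (amenable_zpowCeilExtend hpos)
      (monotone_zpowCeilExtend hpos (Padic.monotone_apply_zpow_of_isUltrametric hf)), ?_⟩
    rintro t (rfl | ⟨n, rfl⟩)
    · rw [zpowCeilExtend_zero, Padic.apply_zero_of_isUltrametric hf]
    · exact zpowCeilExtend_zpow (Fact.out : p.Prime).one_lt n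
  · rintro ⟨g, hg, hgf⟩
    have hfg : (fun x y : ℚ_[p] => f (dist x y)) = fun x y => g (dist x y) :=
      funext₂ fun x y => (hgf _ (Padic.dist_eq_zero_or_exists_zpow x y)).symm
    rw [hfg]
    exact hg ℚ_[p] dist (isUltrametric_dist ℚ_[p])
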